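/- For λ > −1, t ∈ ℝ and integer m ≥ 2, let 𝒜_n(t;λ) = det[μ_{2(i+j)}(t;λ,m)]_{i,j=0}^{n−1} (with 𝒜₀ = 1) be the Hankel determinant of even moments of the generalised higher order Freud weight with parameter λ. Then the recurrence coefficients of the associated monic orthogonal polynomials satisfy β_{2n}(t;λ) = 𝒜_{n+1}(t;λ) 𝒜_{n−1}(t;λ+1) / ( 𝒜_n(t;λ) 𝒜_n(t;λ+1) ) = (d/dt) ln( 𝒜_n(t;λ+1)/𝒜_n(t;λ) ) and β_{2n+1}(t;λ) = 𝒜_n(t;λ) 𝒜_{n+1}(t;λ+1) / ( 𝒜_{n+1}(t;λ) 𝒜_n(t;λ+1) ) = (d/dt) ln( 𝒜_{n+1}(t;λ)/𝒜_n(t;λ+1) ). -/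

import Mathlib

/-
Write `⟨p, q⟩ = ∫ p q ω` and `h_k = ⟨P_k, P_k⟩`, so that `h_k = β_k h_{k-1}`. The recurrence has no
`α_n` term, so `P_k` only has monomials of the parity of `k`, and for `ε ∈ {0, 1}` the monomials
`X^{2j+ε}`, `j < n`, are a unitriangular combination of the `P_{2l+ε}`. Since
`μ_{2(i+j)}(λ+ε) = ⟨X^{2i+ε}, X^{2j+ε}⟩`, this triangularises the Hankel matrix and gives
`𝒜_n(λ+ε) = ∏_{l<n} h_{2l+ε}`, whence the quotient formulas.

For the derivatives, `∂_t μ_k = μ_{k+2}`, so by Jacobi's formula `∂_t 𝒜_{n+1}(λ+ε)` is the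
determinant with its last column shifted by one step. In the same triangularisation only the last
diagonal entry changes, to `⟨X^{2n+2+ε}, P_{2n+ε}⟩ = (β_1 + ⋯ + β_{2n+ε+1}) h_{2n+ε}`. Hence
`∂_t ln 𝒜_n(λ+ε) = β_1 + ⋯ + β_{2n+ε-1}`, and two consecutive such sums differ by one `β`.
-/

open MeasureTheory Real Polynomial

/-- The generalised higher order Freud weight `ω(x;t,λ) = |x|^{2λ+1} exp(t x² − x^{2m})`. -/
noncomputable def freudWeight (m : ℕ) (lam t x : ℝ) : ℝ :=
  |x| ^ (2 * lam + 1) * Real.exp (t * x ^ 2 - x ^ (2 * m))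

/-- The `k`-th moment `μ_k(t;λ,m)` of the generalised higher order Freud weight. -/
noncomputable def freudMoment (m : ℕ) (lam : ℝ) (k : ℕ) (t : ℝ) : ℝ :=
  ∫ x : ℝ, x ^ k * freudWeight m lam t x

/-- The Hankel determinant `𝒜_n(t;λ) = det[μ_{2(i+j)}(t;λ,m)]_{i,j=0}^{n−1}`. -/
noncomputable def hankelA (m : ℕ) (lam : ℝ) (n : ℕ) (t : ℝ) : ℝ :=
  Matrix.det (Matrix.of fun i j : Fin n => freudMoment m lam (2 * ((i : ℕ) + (j : ℕ))) t)

open Matrix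

theorem LinearMap.map_C_mul {R : Type*} [CommRing R] (L : R[X] →ₗ[R] R) (a : R) (p : R[X]) :
    L (C a * p) = a * L p := by
  rw [C_mul', map_smul, smul_eq_mul]

structure IsSymmetricOPS {R : Type*} [CommRing R] (L : R[X] →ₗ[R] R) (P : ℕ → R[X])
    (β : ℕ → R) : Prop where
  zero : P 0 = 1
  one : P 1 = X
  recurrence : ∀ n, 1 ≤ n → P (n + 1) = X * P n - C (β n) * P (n - 1)
  orth : ∀ j k, j ≠ k → L (P j * P k) = 0
  monic : ∀ n, (P n).Monic
  natDegree : ∀ n, (P n).natDegree = n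

namespace IsSymmetricOPS

variable {R : Type*} [CommRing R] {L : R[X] →ₗ[R] R} {P : ℕ → R[X]} {β : ℕ → R}

theorem X_mul_succ (h : IsSymmetricOPS L P β) (n : ℕ) :
    X * P (n + 1) = P (n + 2) + C (β (n + 1)) * P n := by
  rw [h.recurrence (n + 1) (by omega), Nat.add_sub_cancel]; ring

theorem map_mul_self_succ (h : IsSymmetricOPS L P β) (n : ℕ) :
    L (P (n + 1) * P (n + 1)) = β (n + 1) * L (P n * P n) := by
  have hX : L (P (n + 1) * (X * P n)) = L (P (n + 1) * P (n + 1)) := by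
    rcases n with _ | n
    · rw [h.zero, mul_one, h.one]
    · rw [h.X_mul_succ, mul_add, map_add, mul_left_comm, L.map_C_mul,
        h.orth (n + 1 + 1) n (by omega), mul_zero, add_zero]
  rw [← hX, mul_left_comm, ← mul_assoc, h.X_mul_succ, add_mul, map_add, mul_assoc, L.map_C_mul,
    h.orth (n + 2) n (by omega), zero_add]

theorem map_X_pow_mul_of_lt (h : IsSymmetricOPS L P β) {a b : ℕ} (hab : a < b) :
    L (X ^ a * P b) = 0 := by
  induction a generalizing b with
  | zero => rw [pow_zero, ← h.zero, h.orth 0 b (by omega)]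
  | succ a ih =>
    obtain ⟨b, rfl⟩ : ∃ c, b = c + 1 := ⟨b - 1, by omega⟩
    rw [pow_succ, mul_assoc, h.X_mul_succ, mul_add, map_add, mul_left_comm, L.map_C_mul,
      ih (by omega), ih (by omega), mul_zero, add_zero]

theorem map_X_pow_mul_self (h : IsSymmetricOPS L P β) (n : ℕ) :
    L (X ^ n * P n) = L (P n * P n) := by
  induction n with
  | zero => rw [pow_zero, h.zero]
  | succ n ih =>
    rw [pow_succ, mul_assoc, h.X_mul_succ, mul_add, map_add, mul_left_comm, L.map_C_mul,
      h.map_X_pow_mul_of_lt (by omega), ih, zero_add, h.map_mul_self_succ]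

theorem map_X_pow_add_two_mul (h : IsSymmetricOPS L P β) (n : ℕ) :
    L (X ^ (n + 2) * P n) = (∑ j ∈ Finset.range (n + 1), β (j + 1)) * L (P n * P n) := by
  induction n with
  | zero =>
    rw [show X ^ (0 + 2) * P 0 = X ^ 1 * P 1 by rw [h.zero, h.one]; ring,
      h.map_X_pow_mul_self, h.map_mul_self_succ]
    simp
  | succ n ih =>
    rw [pow_succ, mul_assoc, h.X_mul_succ, mul_add, map_add, mul_left_comm, L.map_C_mul, ih,
      h.map_X_pow_mul_self, h.map_mul_self_succ, h.map_mul_self_succ,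
      Finset.sum_range_succ _ (n + 1)]
    ring

theorem coeff_eq_zero_of_odd (h : IsSymmetricOPS L P β) {j n : ℕ} (hjn : Odd (j + n)) :
    (P n).coeff j = 0 := by
  rw [Nat.odd_iff] at hjn
  induction n using Nat.twoStepInduction generalizing j with
  | zero => rw [h.zero, coeff_one, if_neg (by omega)]
  | one => rw [h.one, coeff_X, if_neg (by omega)]
  | more n ih₀ ih₁ =>
    rw [h.recurrence (n + 1) (by omega), Nat.add_sub_cancel, coeff_sub, coeff_C_mul,
      ih₀ (by omega), mul_zero, sub_zero]
    rcases j with _ | j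
    · exact coeff_X_mul_zero _
    · rw [coeff_X_mul, ih₁ (by omega)]

theorem eq_sum_X_pow (h : IsSymmetricOPS L P β) {ε n j : ℕ} (hε : ε < 2) (hj : j < n) :
    P (2 * j + ε) =
      ∑ l : Fin n, C ((P (2 * j + ε)).coeff (2 * l + ε)) * X ^ (2 * (l : ℕ) + ε) := by
  ext k
  simp only [finsetSum_coeff, coeff_C_mul_X_pow]
  by_cases hk : ∃ l : Fin n, k = 2 * l + ε
  · obtain ⟨l, rfl⟩ := hk
    rw [Finset.sum_eq_single l (fun l' _ hl' => if_neg fun h' => hl' (Fin.ext (by omega)))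
      (by simp), if_pos rfl]
  · rw [Finset.sum_eq_zero fun l _ => if_neg fun hl => hk ⟨l, hl⟩]
    by_cases hpar : Odd (k + (2 * j + ε))
    · exact h.coeff_eq_zero_of_odd hpar
    · rw [Nat.not_odd_iff_even, Nat.even_iff] at hpar
      refine coeff_eq_zero_of_natDegree_lt ?_
      rw [h.natDegree]
      by_contra hle
      exact hk ⟨⟨k / 2, by omega⟩, by simp only; omega⟩

theorem det_map_X_pow_mul_X_pow (h : IsSymmetricOPS L P β) {ε n : ℕ} (hε : ε < 2)
    (e : Fin n → ℕ) (he : ∀ i j : Fin n, j < i → e j < 2 * i + ε) :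
    (of fun i j : Fin n => L (X ^ (2 * (i : ℕ) + ε) * X ^ e j)).det =
      ∏ j : Fin n, L (P (2 * j + ε) * X ^ e j) := by
  -- by parity, `U` expresses `P (2 * l + ε)` in the monomials `X ^ (2 * i + ε)`
  set U : Matrix (Fin n) (Fin n) R := of fun l i => (P (2 * l + ε)).coeff (2 * i + ε)
  have hU : U.det = 1 := by
    refine (det_of_isLowerTriangular U fun l i hli => ?_).trans
      (Finset.prod_eq_one fun l _ => ?_)
    · simp only [OrderDual.toDual_lt_toDual, Fin.lt_def] at hli
      exact coeff_eq_zero_of_natDegree_lt (by rw [h.natDegree]; omega)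
    · simpa [U, h.natDegree] using (h.monic (2 * l + ε)).coeff_natDegree
  have hUG : U * (of fun i j : Fin n => L (X ^ (2 * (i : ℕ) + ε) * X ^ e j)) =
      of fun (l : Fin n) j => L (P (2 * l + ε) * X ^ e j) := by
    ext l j
    rw [mul_apply, of_apply, h.eq_sum_X_pow hε l.isLt, Finset.sum_mul, map_sum]
    refine Finset.sum_congr rfl fun i _ => ?_
    rw [mul_assoc, L.map_C_mul]
    rfl
  rw [← one_mul (det _), ← hU, ← det_mul, hUG, det_of_isUpperTriangular fun l j hjl => ?_]
  · rfl
  · rw [of_apply, mul_comm]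
    exact h.map_X_pow_mul_of_lt (he l j hjl)

theorem det_gram_eq_prod (h : IsSymmetricOPS L P β) {ε : ℕ} (hε : ε < 2) (n : ℕ) :
    (of fun i j : Fin n => L (X ^ (2 * (i : ℕ) + ε) * X ^ (2 * (j : ℕ) + ε))).det =
      ∏ j ∈ Finset.range n, L (P (2 * j + ε) * P (2 * j + ε)) := by
  rw [h.det_map_X_pow_mul_X_pow hε _ fun i j hji => by simp only [Fin.lt_def] at hji; omega,
    ← Fin.prod_univ_eq_prod_range]
  exact Finset.prod_congr rfl fun j _ => by rw [mul_comm, h.map_X_pow_mul_self]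

theorem det_gram_updateCol_last (h : IsSymmetricOPS L P β) {ε : ℕ} (hε : ε < 2) (n : ℕ) :
    ((of fun i j : Fin (n + 1) => L (X ^ (2 * (i : ℕ) + ε) * X ^ (2 * (j : ℕ) + ε))).updateCol
      (Fin.last n) fun i => L (X ^ (2 * (i : ℕ) + ε) * X ^ (2 * (n + 1) + ε))).det =
      (∑ j ∈ Finset.range (2 * n + ε + 1), β (j + 1)) *
        ∏ j ∈ Finset.range (n + 1), L (P (2 * j + ε) * P (2 * j + ε)) := by
  set e : Fin (n + 1) → ℕ :=
    Function.update (fun j => 2 * j + ε) (Fin.last n) (2 * (n + 1) + ε)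
  have he (i j : Fin (n + 1)) (hji : j < i) : e j < 2 * i + ε := by
    simp only [e, Function.update_of_ne (Fin.ne_last_of_lt hji)]
    simp only [Fin.lt_def] at hji
    omega
  calc _ = (of fun (i : Fin (n + 1)) j => L (X ^ (2 * (i : ℕ) + ε) * X ^ e j)).det := by
        congr 1
        ext i j
        rcases eq_or_ne j (Fin.last n) with rfl | hj <;> simp [e, *]
    _ = ∏ j : Fin (n + 1), L (P (2 * j + ε) * X ^ e j) := h.det_map_X_pow_mul_X_pow hε e he
    _ = _ := by
      rw [Fin.prod_univ_castSucc, Finset.prod_range_succ, ← Fin.prod_univ_eq_prod_range]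
      simp only [e, Function.update_self, Fin.val_castSucc,
        Function.update_of_ne (Fin.castSucc_lt_last _).ne, Fin.val_last]
      rw [show 2 * (n + 1) + ε = 2 * n + ε + 2 by ring, mul_comm _ (X ^ _),
        h.map_X_pow_add_two_mul]
      simp only [mul_comm (P _), h.map_X_pow_mul_self]
      ring

end IsSymmetricOPS

section JacobiFormula

variable {𝕜 : Type*} [NontriviallyNormedField 𝕜]

theorem hasDerivAt_det {ι : Type*} [Fintype ι] [DecidableEq ι] {M : 𝕜 → Matrix ι ι 𝕜}
    {M' : Matrix ι ι 𝕜} {t : 𝕜} (hM : ∀ i j, HasDerivAt (fun s => M s i j) (M' i j) t) :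
    HasDerivAt (fun s => (M s).det) (∑ j, ((M t).updateCol j fun i => M' i j).det) t := by
  simp only [det_apply']
  refine (HasDerivAt.fun_sum fun σ _ =>
    (HasDerivAt.fun_finsetProd fun j _ => hM (σ j) j).const_mul
      ((Equiv.Perm.sign σ : ℤ) : 𝕜)).congr_deriv ?_
  rw [Finset.sum_comm]
  refine Finset.sum_congr rfl fun σ _ => ?_
  rw [Finset.mul_sum]
  refine Finset.sum_congr rfl fun j _ => ?_
  rw [← Finset.mul_prod_erase _ _ (Finset.mem_univ j), updateCol_self, smul_eq_mul,
    mul_comm (M' _ _)]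
  congr 2
  exact Finset.prod_congr rfl fun k hk => (updateCol_ne (Finset.ne_of_mem_erase hk)).symm

theorem hasDerivAt_det_hankel {c : ℕ → 𝕜 → 𝕜} {t : 𝕜}
    (hc : ∀ k, HasDerivAt (c k) (c (k + 1) t) t) (n : ℕ) :
    HasDerivAt (fun s => (of fun i j : Fin (n + 1) => c (i + j) s).det)
      ((of fun i j : Fin (n + 1) => c (i + j) t).updateCol (Fin.last n)
        fun i => c (i + (n + 1)) t).det t := by
  refine (hasDerivAt_det (M := fun s => of fun i j : Fin (n + 1) => c (i + j) s)
    fun i j => hc _).congr_deriv ?_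
  rw [Finset.sum_eq_single (Fin.last n)]
  · simp only [Fin.val_last, add_assoc]
  -- differentiating any other column reproduces the next one
  · intro j _ hj
    obtain ⟨j, rfl⟩ := Fin.exists_castSucc_eq.2 hj
    refine det_zero_of_column_eq (Fin.castSucc_lt_succ (i := j)).ne fun i => ?_
    rw [updateCol_self, updateCol_ne (Fin.castSucc_lt_succ (i := j)).ne', of_apply]
    simp [add_assoc]
  · simp

end JacobiFormula

theorem integrable_abs_rpow_mul_exp_neg_sq {s : ℝ} (hs : -1 < s) :
    Integrable fun x : ℝ => |x| ^ s * exp (-x ^ 2) := by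
  have hIoi : IntegrableOn (fun x : ℝ => |x| ^ s * exp (-x ^ 2)) (Set.Ioi 0) :=
    (integrableOn_rpow_mul_exp_neg_mul_sq one_pos hs).congr_fun
      (fun x hx => by simp only [abs_of_pos (Set.mem_Ioi.1 hx), neg_one_mul]) measurableSet_Ioi
  have hIio : IntegrableOn (fun x : ℝ => |x| ^ s * exp (-x ^ 2)) (Set.Iio 0) := by
    rw [← (Measure.measurePreserving_neg volume).integrableOn_comp_preimage
      (Homeomorph.neg ℝ).measurableEmbedding, Set.neg_preimage, Set.neg_Iio, neg_zero]
    simpa only [Function.comp_def, abs_neg, neg_sq] using hIoi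
  rw [← integrableOn_univ, ← Set.Iio_union_Ici (a := 0), integrableOn_union,
    integrableOn_Ici_iff_integrableOn_Ioi]
  exact ⟨hIio, hIoi⟩

theorem mul_sq_sub_pow_le {m : ℕ} (hm : 2 ≤ m) {c s : ℝ} (hs : |s| ≤ c) (x : ℝ) :
    s * x ^ 2 - x ^ (2 * m) ≤ (c + 1) ^ 2 - x ^ 2 := by
  have hc : 0 ≤ c := (abs_nonneg s).trans hs
  have hsc : s * x ^ 2 ≤ c * x ^ 2 :=
    mul_le_mul_of_nonneg_right ((le_abs_self s).trans hs) (sq_nonneg x)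
  rw [pow_mul]
  rcases le_or_gt (x ^ 2) (c + 1) with hx | hx
  · nlinarith [pow_nonneg (sq_nonneg x) m, sq_nonneg x]
  · have : (x ^ 2) ^ 2 ≤ (x ^ 2) ^ m := pow_le_pow_right₀ (by linarith) hm
    nlinarith

section FreudWeight

variable {m : ℕ} {lam t : ℝ}

theorem freudWeight_nonneg (x : ℝ) : 0 ≤ freudWeight m lam t x :=
  mul_nonneg (rpow_nonneg (abs_nonneg x) _) (exp_pos _).le

theorem freudWeight_pos {x : ℝ} (hx : x ≠ 0) : 0 < freudWeight m lam t x :=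
  mul_pos (rpow_pos_of_pos (abs_pos.2 hx) _) (exp_pos _)

theorem norm_pow_mul_freudWeight_le (hm : 2 ≤ m) (k : ℕ) {c x : ℝ} (ht : |t| ≤ c)
    (hx : x ≠ 0) :
    ‖x ^ k * freudWeight m lam t x‖ ≤
      exp ((c + 1) ^ 2) * (|x| ^ ((k : ℝ) + (2 * lam + 1)) * exp (-x ^ 2)) := by
  rw [norm_mul, norm_pow, Real.norm_eq_abs, Real.norm_of_nonneg (freudWeight_nonneg x),
    freudWeight, rpow_add (abs_pos.2 hx) (k : ℝ), rpow_natCast, ← mul_assoc, mul_left_comm]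
  refine mul_le_mul_of_nonneg_left ?_ (by positivity)
  rw [← exp_add]
  exact exp_le_exp.2 (by linarith [mul_sq_sub_pow_le hm ht x])

theorem integrable_pow_mul_freudWeight (hm : 2 ≤ m) (hlam : -1 < lam) (t : ℝ) (k : ℕ) :
    Integrable fun x : ℝ => x ^ k * freudWeight m lam t x := by
  have hs : -1 < (k : ℝ) + (2 * lam + 1) := by linarith [k.cast_nonneg (α := ℝ)]
  refine ((integrable_abs_rpow_mul_exp_neg_sq hs).const_mul (exp ((|t| + 1) ^ 2))).mono'
    (by unfold freudWeight; fun_prop) ?_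
  filter_upwards [Measure.ae_ne volume 0] with x hx
  exact norm_pow_mul_freudWeight_le hm k le_rfl hx

theorem hasDerivAt_freudMoment (hm : 2 ≤ m) (hlam : -1 < lam) (k : ℕ) (t : ℝ) :
    HasDerivAt (freudMoment m lam k) (freudMoment m lam (k + 2) t) t := by
  have hs : -1 < ((k + 2 : ℕ) : ℝ) + (2 * lam + 1) := by
    linarith [(k + 2).cast_nonneg (α := ℝ)]
  refine (hasDerivAt_integral_of_dominated_loc_of_deriv_le
    (F' := fun s x => x ^ (k + 2) * freudWeight m lam s x) (Metric.ball_mem_nhds t one_pos)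
    (.of_forall fun s => (integrable_pow_mul_freudWeight hm hlam s k).aestronglyMeasurable)
    (integrable_pow_mul_freudWeight hm hlam t k)
    (integrable_pow_mul_freudWeight hm hlam t (k + 2)).aestronglyMeasurable ?_
    ((integrable_abs_rpow_mul_exp_neg_sq hs).const_mul (exp ((|t| + 1 + 1) ^ 2))) ?_).2
  · filter_upwards [Measure.ae_ne volume 0] with x hx s hs
    refine norm_pow_mul_freudWeight_le hm (k + 2) ?_ hx
    rw [Metric.mem_ball, Real.dist_eq] at hs
    linarith [abs_sub_abs_le_abs_sub s t]
  · refine .of_forall fun x s _ => ?_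
    have h := ((hasDerivAt_mul_const (x := s) (x ^ 2)).sub_const (x ^ (2 * m))).exp.const_mul
      (x ^ k * |x| ^ (2 * lam + 1))
    rw [show x ^ (k + 2) * freudWeight m lam s x =
        x ^ k * |x| ^ (2 * lam + 1) * (exp (s * x ^ 2 - x ^ (2 * m)) * x ^ 2) by
      unfold freudWeight; ring]
    simpa only [freudWeight, mul_assoc] using h

theorem freudMoment_add_nat (ε k : ℕ) :
    freudMoment m (lam + ε) k t = freudMoment m lam (k + 2 * ε) t := by
  refine integral_congr_ae ?_
  filter_upwards [Measure.ae_ne volume 0] with x hx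
  have hpow : |x| ^ (2 * (lam + ε) + 1) = |x| ^ (2 * lam + 1) * x ^ (2 * ε) := by
    rw [show 2 * (lam + ε) + 1 = (2 * lam + 1) + ((2 * ε : ℕ) : ℝ) by push_cast; ring,
      rpow_add (abs_pos.2 hx), rpow_natCast, pow_abs_two_mul]
  simp only [freudWeight, hpow, pow_add]
  ring

end FreudWeight

/-- Defined through the moments, so that it is linear without integrability side conditions;
`freudFunctional_apply` identifies it with `p ↦ ∫ p ω`. -/
noncomputable def freudFunctional (m : ℕ) (lam t : ℝ) : ℝ[X] →ₗ[ℝ] ℝ :=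
  lsum fun k => LinearMap.mulRight ℝ (freudMoment m lam k t)

section FreudFunctional

variable {m : ℕ} {lam t : ℝ}

theorem freudFunctional_monomial (k : ℕ) (a : ℝ) :
    freudFunctional m lam t (monomial k a) = a * freudMoment m lam k t := by
  simp [freudFunctional]

theorem freudFunctional_X_pow (k : ℕ) :
    freudFunctional m lam t (X ^ k) = freudMoment m lam k t := by
  rw [← monomial_one_right_eq_X_pow, freudFunctional_monomial, one_mul]

theorem integrable_eval_mul_freudWeight (hm : 2 ≤ m) (hlam : -1 < lam) (p : ℝ[X]) :
    Integrable fun x => p.eval x * freudWeight m lam t x := by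
  induction p using Polynomial.induction_on' with
  | add p q hp hq => simpa only [eval_add, add_mul] using hp.fun_add hq
  | monomial k a =>
    simpa only [eval_monomial, mul_assoc] using
      (integrable_pow_mul_freudWeight hm hlam t k).const_mul a

theorem freudFunctional_apply (hm : 2 ≤ m) (hlam : -1 < lam) (p : ℝ[X]) :
    freudFunctional m lam t p = ∫ x, p.eval x * freudWeight m lam t x := by
  induction p using Polynomial.induction_on' with
  | add p q hp hq =>
    rw [map_add, hp, hq, ← integral_add (integrable_eval_mul_freudWeight hm hlam p)
      (integrable_eval_mul_freudWeight hm hlam q)]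
    simp only [eval_add, add_mul]
  | monomial k a =>
    rw [freudFunctional_monomial, freudMoment, ← integral_const_mul]
    simp only [eval_monomial, mul_assoc]

theorem freudFunctional_mul_self_pos (hm : 2 ≤ m) (hlam : -1 < lam) {p : ℝ[X]} (hp : p ≠ 0) :
    0 < freudFunctional m lam t (p * p) := by
  rw [freudFunctional_apply hm hlam, integral_pos_iff_support_of_nonneg
    (fun x => by rw [eval_mul]; exact mul_nonneg (mul_self_nonneg _) (freudWeight_nonneg x))
    (integrable_eval_mul_freudWeight hm hlam _)]
  have hZ : ({x | p.IsRoot x} ∪ {0} : Set ℝ).Finite :=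
    (finite_setOfPred_isRoot hp).union (Set.finite_singleton 0)
  refine (hZ.isClosed.isOpen_compl.measure_pos volume hZ.infinite_compl.nonempty).trans_le
    (measure_mono fun x hx => ?_)
  simp only [Set.mem_compl_iff, Set.mem_union, Set.mem_ofPred_eq, Set.mem_singleton_iff,
    not_or] at hx
  rw [Function.mem_support, eval_mul]
  exact mul_ne_zero (mul_self_ne_zero.2 hx.1) (freudWeight_pos hx.2).ne'

theorem freudMoment_add_nat_eq_freudFunctional (ε a b : ℕ) :
    freudMoment m (lam + ε) (2 * (a + b)) t =
      freudFunctional m lam t (X ^ (2 * a + ε) * X ^ (2 * b + ε)) := by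
  rw [freudMoment_add_nat, ← pow_add, freudFunctional_X_pow]
  ring_nf

end FreudFunctional

section Hankel

variable {m : ℕ} {lam t : ℝ} {P : ℕ → ℝ[X]} {β : ℕ → ℝ} {ε : ℕ}

theorem hankelA_add_nat_eq_prod (hε : ε < 2) (hP : IsSymmetricOPS (freudFunctional m lam t) P β)
    (n : ℕ) :
    hankelA m (lam + ε) n t =
      ∏ j ∈ Finset.range n, freudFunctional m lam t (P (2 * j + ε) * P (2 * j + ε)) := by
  simp only [hankelA, freudMoment_add_nat_eq_freudFunctional]
  exact hP.det_gram_eq_prod hε n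

theorem hankelA_add_nat_succ (hε : ε < 2) (hP : IsSymmetricOPS (freudFunctional m lam t) P β)
    (n : ℕ) :
    hankelA m (lam + ε) (n + 1) t =
      hankelA m (lam + ε) n t * freudFunctional m lam t (P (2 * n + ε) * P (2 * n + ε)) := by
  rw [hankelA_add_nat_eq_prod hε hP, hankelA_add_nat_eq_prod hε hP, Finset.prod_range_succ]

-- For `n = 0` the truncated subtraction `2 * n + ε - 1` gives the empty sum.
theorem hasDerivAt_hankelA_add_nat (hm : 2 ≤ m) (hlam : -1 < lam) (hε : ε < 2)
    (hP : IsSymmetricOPS (freudFunctional m lam t) P β) (n : ℕ) :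
    HasDerivAt (hankelA m (lam + ε) n)
      ((∑ j ∈ Finset.range (2 * n + ε - 1), β (j + 1)) * hankelA m (lam + ε) n t) t := by
  rcases n with _ | n
  · have h₀ : hankelA m (lam + ε) 0 = fun _ => 1 := funext fun _ => Matrix.det_isEmpty
    rw [h₀, show 2 * 0 + ε - 1 = 0 by omega, Finset.range_zero, Finset.sum_empty, zero_mul]
    exact hasDerivAt_const t 1
  · have hc (k : ℕ) : HasDerivAt (freudMoment m (lam + ε) (2 * k))
        (freudMoment m (lam + ε) (2 * (k + 1)) t) t :=
      hasDerivAt_freudMoment hm (by linarith [ε.cast_nonneg (α := ℝ)]) (2 * k) t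
    refine (hasDerivAt_det_hankel hc n).congr_deriv ?_
    simp only [freudMoment_add_nat_eq_freudFunctional]
    rw [hP.det_gram_updateCol_last hε n, hankelA_add_nat_eq_prod hε hP,
      show 2 * (n + 1) + ε - 1 = 2 * n + ε + 1 by omega]

theorem hankelA_pos (hm : 2 ≤ m) (hlam : -1 < lam)
    (hP : IsSymmetricOPS (freudFunctional m lam t) P β) (n : ℕ) :
    0 < hankelA m lam n t ∧ 0 < hankelA m (lam + 1) n t := by
  have hpos (ε : ℕ) (hε : ε < 2) : 0 < hankelA m (lam + ε) n t := by
    rw [hankelA_add_nat_eq_prod hε hP]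
    exact Finset.prod_pos fun j _ => freudFunctional_mul_self_pos hm hlam (hP.monic _).ne_zero
  simpa using And.intro (hpos 0 (by norm_num)) (hpos 1 (by norm_num))

end Hankel

theorem deriv_log_div_eq_sub {E D : ℝ → ℝ} {t a b : ℝ} (hE : HasDerivAt E (a * E t) t)
    (hD : HasDerivAt D (b * D t) t) (hE₀ : E t ≠ 0) (hD₀ : D t ≠ 0) :
    deriv (fun s => Real.log (E s / D s)) t = a - b := by
  rw [((hE.fun_div hD hD₀).log (div_ne_zero hE₀ hD₀)).deriv]
  field_simp

section RecurrenceCoefficients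

variable {m : ℕ} {lam t : ℝ} {P : ℕ → ℝ[X]} {β : ℕ → ℝ}

theorem recurrenceCoeff_even (hm : 2 ≤ m) (hlam : -1 < lam)
    (hP : IsSymmetricOPS (freudFunctional m lam t) P β) {n : ℕ} (hn : 1 ≤ n) :
    β (2 * n) = hankelA m lam (n + 1) t * hankelA m (lam + 1) (n - 1) t /
        (hankelA m lam n t * hankelA m (lam + 1) n t) ∧
      β (2 * n) = deriv (fun s => log (hankelA m (lam + 1) n s / hankelA m lam n s)) t := by
  obtain ⟨n, rfl⟩ := Nat.exists_eq_add_of_le' hn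
  have hA₀ := hankelA_add_nat_succ (ε := 0) (by norm_num) hP (n + 1)
  have hA₁ := hankelA_add_nat_succ (ε := 1) (by norm_num) hP n
  have hpos := hankelA_pos hm hlam hP
  have hD₀ := hasDerivAt_hankelA_add_nat hm hlam (ε := 0) (by norm_num) hP (n + 1)
  have hD₁ := hasDerivAt_hankelA_add_nat hm hlam (ε := 1) (by norm_num) hP (n + 1)
  simp only [Nat.cast_zero, Nat.cast_one, add_zero] at hA₀ hA₁ hD₀ hD₁
  constructor
  · have := (hpos (n + 1)).1
    have := (hpos n).2
    have : 0 < freudFunctional m lam t (P (2 * n + 1) * P (2 * n + 1)) :=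
      freudFunctional_mul_self_pos hm hlam (hP.monic _).ne_zero
    rw [Nat.add_sub_cancel, hA₀, hA₁, show 2 * (n + 1) = 2 * n + 1 + 1 by ring,
      hP.map_mul_self_succ]
    field_simp
  · rw [deriv_log_div_eq_sub hD₁ hD₀ (hpos _).2.ne' (hpos _).1.ne',
      show 2 * (n + 1) + 1 - 1 = 2 * n + 1 + 1 by omega, show 2 * (n + 1) - 1 = 2 * n + 1 by omega,
      Finset.sum_range_succ _ (2 * n + 1), show 2 * (n + 1) = 2 * n + 1 + 1 by ring]
    ring

theorem recurrenceCoeff_odd (hm : 2 ≤ m) (hlam : -1 < lam)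
    (hP : IsSymmetricOPS (freudFunctional m lam t) P β) (n : ℕ) :
    β (2 * n + 1) = hankelA m lam n t * hankelA m (lam + 1) (n + 1) t /
        (hankelA m lam (n + 1) t * hankelA m (lam + 1) n t) ∧
      β (2 * n + 1) =
        deriv (fun s => log (hankelA m lam (n + 1) s / hankelA m (lam + 1) n s)) t := by
  have hA₀ := hankelA_add_nat_succ (ε := 0) (by norm_num) hP n
  have hA₁ := hankelA_add_nat_succ (ε := 1) (by norm_num) hP n
  have hpos := hankelA_pos hm hlam hP
  have hD₀ := hasDerivAt_hankelA_add_nat hm hlam (ε := 0) (by norm_num) hP (n + 1)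
  have hD₁ := hasDerivAt_hankelA_add_nat hm hlam (ε := 1) (by norm_num) hP n
  simp only [Nat.cast_zero, Nat.cast_one, add_zero] at hA₀ hA₁ hD₀ hD₁
  constructor
  · obtain ⟨_, _⟩ := hpos n
    have : 0 < freudFunctional m lam t (P (2 * n) * P (2 * n)) :=
      freudFunctional_mul_self_pos hm hlam (hP.monic _).ne_zero
    rw [hA₀, hA₁, hP.map_mul_self_succ]
    field_simp
  · rw [deriv_log_div_eq_sub hD₀ hD₁ (hpos _).1.ne' (hpos _).2.ne',
      show 2 * (n + 1) - 1 = 2 * n + 1 by omega, show 2 * n + 1 - 1 = 2 * n by omega,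
      Finset.sum_range_succ _ (2 * n)]
    ring

end RecurrenceCoefficients

theorem recurrence_coefficients_hankel_general (m : ℕ) (hm : 2 ≤ m)
    (P : ℝ → ℝ → ℕ → Polynomial ℝ) (β : ℝ → ℝ → ℕ → ℝ)
    (hmonic : ∀ lam, -1 < lam → ∀ t n, (P lam t n).Monic)
    (hdeg : ∀ lam, -1 < lam → ∀ t n, (P lam t n).natDegree = n)
    (horth : ∀ lam, -1 < lam → ∀ t, ∀ j k, j ≠ k →
      ∫ x : ℝ, (P lam t j).eval x * (P lam t k).eval x * freudWeight m lam t x = 0)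
    (hP0 : ∀ lam, -1 < lam → ∀ t, P lam t 0 = 1)
    (hP1 : ∀ lam, -1 < lam → ∀ t, P lam t 1 = X)
    (hrec : ∀ lam, -1 < lam → ∀ t n, 1 ≤ n →
      P lam t (n + 1) = X * P lam t n - C (β lam t n) * P lam t (n - 1)) :
    ∀ lam, -1 < lam → ∀ (t : ℝ) (n : ℕ),
      (1 ≤ n →
        β lam t (2 * n) =
          hankelA m lam (n + 1) t * hankelA m (lam + 1) (n - 1) t /
            (hankelA m lam n t * hankelA m (lam + 1) n t) ∧
        β lam t (2 * n) =
          deriv (fun s => Real.log (hankelA m (lam + 1) n s / hankelA m lam n s)) t) ∧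
      (β lam t (2 * n + 1) =
          hankelA m lam n t * hankelA m (lam + 1) (n + 1) t /
            (hankelA m lam (n + 1) t * hankelA m (lam + 1) n t) ∧
        β lam t (2 * n + 1) =
          deriv (fun s => Real.log (hankelA m lam (n + 1) s / hankelA m (lam + 1) n s)) t) := by
  intro lam hlam t n
  have hP : IsSymmetricOPS (freudFunctional m lam t) (P lam t) (β lam t) :=
    { zero := hP0 lam hlam t
      one := hP1 lam hlam t
      recurrence := hrec lam hlam t
      orth := fun j k hjk => by
        rw [freudFunctional_apply hm hlam, ← horth lam hlam t j k hjk]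
        simp only [eval_mul]
      monic := hmonic lam hlam t
      natDegree := hdeg lam hlam t }
  exact ⟨recurrenceCoeff_even hm hlam hP, recurrenceCoeff_odd hm hlam hP n⟩

/-- For `λ > −1`, `t ∈ ℝ` and integer `m ≥ 2`, in terms of the Hankel
determinants `𝒜_n(t;λ)` of even moments, the recurrence coefficients of the monic orthogonal
polynomials of the generalised higher order Freud weight satisfy
`β_{2n}(t;λ) = 𝒜_{n+1}(t;λ)𝒜_{n−1}(t;λ+1)/(𝒜_n(t;λ)𝒜_n(t;λ+1)) = (d/dt) ln(𝒜_n(t;λ+1)/𝒜_n(t;λ))`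
and
`β_{2n+1}(t;λ) = 𝒜_n(t;λ)𝒜_{n+1}(t;λ+1)/(𝒜_{n+1}(t;λ)𝒜_n(t;λ+1)) = (d/dt) ln(𝒜_{n+1}(t;λ)/𝒜_n(t;λ+1))`. -/
theorem recurrence_coefficients_hankel (m : ℕ) (hm : 2 ≤ m)
    (P : ℝ → ℝ → ℕ → Polynomial ℝ) (β : ℝ → ℝ → ℕ → ℝ)
    (hmonic : ∀ lam, -1 < lam → ∀ t n, (P lam t n).Monic)
    (hdeg : ∀ lam, -1 < lam → ∀ t n, (P lam t n).natDegree = n)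
    (horth : ∀ lam, -1 < lam → ∀ t, ∀ j k, j ≠ k →
      ∫ x : ℝ, (P lam t j).eval x * (P lam t k).eval x * freudWeight m lam t x = 0)
    (hβpos : ∀ lam, -1 < lam → ∀ t n, 1 ≤ n → 0 < β lam t n)
    (hP0 : ∀ lam, -1 < lam → ∀ t, P lam t 0 = 1)
    (hP1 : ∀ lam, -1 < lam → ∀ t, P lam t 1 = X)
    (hrec : ∀ lam, -1 < lam → ∀ t n, 1 ≤ n →
      P lam t (n + 1) = X * P lam t n - C (β lam t n) * P lam t (n - 1)) :
    ∀ lam, -1 < lam → ∀ (t : ℝ) (n : ℕ),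
      (1 ≤ n →
        β lam t (2 * n) =
          hankelA m lam (n + 1) t * hankelA m (lam + 1) (n - 1) t /
            (hankelA m lam n t * hankelA m (lam + 1) n t) ∧
        β lam t (2 * n) =
          deriv (fun s => Real.log (hankelA m (lam + 1) n s / hankelA m lam n s)) t) ∧
      (β lam t (2 * n + 1) =
          hankelA m lam n t * hankelA m (lam + 1) (n + 1) t /
            (hankelA m lam (n + 1) t * hankelA m (lam + 1) n t) ∧
        β lam t (2 * n + 1) =
          deriv (fun s => Real.log (hankelA m lam (n + 1) s / hankelA m (lam + 1) n s)) t) :=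
  recurrence_coefficients_hankel_general m hm P β hmonic hdeg horth hP0 hP1 hrec
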